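/- arXiv:2106.03918 — 3 statements merged into one kernel-verified Lean document; each statement's English description precedes it below -/
import Mathlib

section
/- (Hardy–Littlewood–Pólya) For w, w' ∈ ℝ^d, w' is majorized by w if and only if there exists a doubly stochastic d×d matrix M with w' = M w. -/
/-- The vector `v` with entries sorted in decreasing order. -/
noncomputable def sortDesc {d : ℕ} (v : Fin d → ℝ) : Fin d → ℝ :=
  fun i => v (Tuple.sort (fun j => -v j) i)

/-- Sum of the `k` largest entries of `v`. -/
noncomputable def psum {d : ℕ} (v : Fin d → ℝ) (k : ℕ) : ℝ :=
  ∑ i ∈ Finset.univ.filter (fun i : Fin d => (i : ℕ) < k), sortDesc v i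

/-- `v ≺ w` : `v` is majorized by `w`. -/
def Majorizes {d : ℕ} (v w : Fin d → ℝ) : Prop :=
  (∀ k : ℕ, k ≤ d → psum v k ≤ psum w k) ∧ ∑ i, v i = ∑ i, w i

/-- `M` is a doubly stochastic matrix. -/
def DoublyStochastic {d : ℕ} (M : Matrix (Fin d) (Fin d) ℝ) : Prop :=
  (∀ i j, 0 ≤ M i j) ∧ (∀ i, ∑ j, M i j = 1) ∧ (∀ j, ∑ i, M i j = 1)

/-! By Birkhoff's theorem the vectors `M w` with `M` doubly stochastic form the convex hull of
the rearrangements `w ∘ σ`. If `w' ≺ w`, the rearrangement inequality followed by Abel summation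
against the partial sums gives, for every weight vector `c`,
`⟨c, w'⟩ ≤ ⟨sort c, sort w'⟩ ≤ ⟨sort c, sort w⟩ = ⟨c, w ∘ σ⟩` for some `σ`, so no hyperplane
separates `w'` from that convex hull. Conversely, the `k` largest entries of `M w` add up to
`∑ⱼ cⱼ wⱼ` with `0 ≤ c ≤ 1` and `∑ c = k`, which is at most the sum of the `k` largest entries
of `w`: compare termwise with the `k`-th largest entry of `w` as a threshold. -/

open Finset Matrix

theorem Finset.sum_range_mul_nonneg_of_antitoneOn {R : Type*} [CommRing R] [PartialOrder R]
    [IsOrderedRing R] {c g : ℕ → R} {n : ℕ} (hc : AntitoneOn c (Set.Iio n))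
    (hg : ∀ k < n, 0 ≤ ∑ i ∈ range k, g i) (hn : ∑ i ∈ range n, g i = 0) :
    0 ≤ ∑ i ∈ range n, c i * g i := by
  simp only [← smul_eq_mul (a := c _)]
  rw [sum_range_by_parts, hn, smul_zero, zero_sub, neg_nonneg]
  refine sum_nonpos fun i hi => mul_nonpos_of_nonpos_of_nonneg ?_ (hg _ ?_)
  · rw [mem_range] at hi
    exact sub_nonpos.2 (hc (by simp; omega) (by simp; omega) (Nat.le_succ i))
  · rw [mem_range] at hi
    omega

section
variable {d : ℕ}

theorem Fin.sum_filter_val_lt_eq_sum_range {M : Type*} [AddCommMonoid M] (f : ℕ → M) {k : ℕ}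
    (hk : k ≤ d) : ∑ i : Fin d with i.val < k, f i = ∑ i ∈ range k, f i := by
  rw [sum_filter, Fin.sum_univ_eq_sum_range (fun i => if i < k then f i else 0), ← sum_filter]
  congr 1
  ext i
  simp only [mem_filter, mem_range]
  omega

theorem sum_mul_le_sum_mul_of_antitone {c u v : Fin d → ℝ} (hc : Antitone c)
    (hle : ∀ k ≤ d, ∑ i : Fin d with i.val < k, u i ≤ ∑ i : Fin d with i.val < k, v i)
    (htotal : ∑ i, u i = ∑ i, v i) : ∑ i, c i * u i ≤ ∑ i, c i * v i := by
  let seq (f : Fin d → ℝ) (n : ℕ) : ℝ := if h : n < d then f ⟨n, h⟩ else 0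
  have seq_val (f : Fin d → ℝ) (i : Fin d) : seq f i = f i := by simp [seq]
  have sum_seq (f : Fin d → ℝ) {k : ℕ} (hk : k ≤ d) :
      ∑ i : Fin d with i.val < k, f i = ∑ i ∈ range k, seq f i := by
    simp only [← seq_val f, Fin.sum_filter_val_lt_eq_sum_range _ hk]
  have by_parts : 0 ≤ ∑ i ∈ range d, seq c i * seq (v - u) i := by
    refine sum_range_mul_nonneg_of_antitoneOn ?_ (fun k hk => ?_) ?_
    · intro i hi j hj hij
      simp only [seq, dif_pos (Set.mem_Iio.1 hi), dif_pos (Set.mem_Iio.1 hj)]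
      exact hc (Fin.mk_le_mk.2 hij)
    · rw [← sum_seq _ hk.le]
      simpa [sum_sub_distrib] using hle k hk.le
    · rw [← sum_seq _ le_rfl]
      simp [sum_sub_distrib, htotal]
  have : ∑ i, c i * (v i - u i) = ∑ i ∈ range d, seq c i * seq (v - u) i := by
    rw [← Fin.sum_univ_eq_sum_range]
    simp only [seq_val, Pi.sub_apply]
  simp only [mul_sub, sum_sub_distrib] at this
  linarith

noncomputable def sortDescPerm (v : Fin d → ℝ) : Equiv.Perm (Fin d) := Tuple.sort fun j => -v j

theorem sortDesc_eq_comp (v : Fin d → ℝ) : sortDesc v = v ∘ sortDescPerm v := rfl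

theorem sortDesc_antitone (v : Fin d → ℝ) : Antitone (sortDesc v) :=
  fun _ _ hij => neg_le_neg_iff.1 (Tuple.monotone_sort (fun j => -v j) hij)

theorem sum_sortDesc (v : Fin d → ℝ) : ∑ i, sortDesc v i = ∑ i, v i :=
  Equiv.sum_comp (sortDescPerm v) v

theorem sum_mul_le_sum_sortDesc_mul_sortDesc (c u : Fin d → ℝ) :
    ∑ i, c i * u i ≤ ∑ i, sortDesc c i * sortDesc u i := by
  have := ((sortDesc_antitone c).monovary (sortDesc_antitone u)).sum_mul_comp_perm_le_sum_mul
    (σ := (sortDescPerm u)⁻¹ * sortDescPerm c)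
  refine le_trans (le_of_eq ?_) this
  rw [← Equiv.sum_comp (sortDescPerm c)]
  simp [sortDesc_eq_comp]

theorem exists_perm_sum_sortDesc_mul_sortDesc_eq (c w : Fin d → ℝ) :
    ∃ σ : Equiv.Perm (Fin d), ∑ i, sortDesc c i * sortDesc w i = ∑ i, c i * w (σ i) := by
  refine ⟨sortDescPerm w * (sortDescPerm c)⁻¹, ?_⟩
  rw [← Equiv.sum_comp (sortDescPerm c)
    fun j => c j * w ((sortDescPerm w * (sortDescPerm c)⁻¹) j)]
  simp [sortDesc_eq_comp]

theorem Majorizes.sum_mul_sortDesc_le {v w c : Fin d → ℝ} (h : Majorizes v w)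
    (hc : Antitone c) :
    ∑ i, c i * sortDesc v i ≤ ∑ i, c i * sortDesc w i :=
  sum_mul_le_sum_mul_of_antitone hc h.1 (by rw [sum_sortDesc, sum_sortDesc, h.2])

theorem Majorizes.exists_perm_sum_mul_le {v w : Fin d → ℝ} (h : Majorizes v w) (c : Fin d → ℝ) :
    ∃ σ : Equiv.Perm (Fin d), ∑ i, c i * v i ≤ ∑ i, c i * w (σ i) := by
  obtain ⟨σ, hσ⟩ := exists_perm_sum_sortDesc_mul_sortDesc_eq c w
  refine ⟨σ, ?_⟩
  calc ∑ i, c i * v i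
      ≤ ∑ i, sortDesc c i * sortDesc v i := sum_mul_le_sum_sortDesc_mul_sortDesc c v
    _ ≤ ∑ i, sortDesc c i * sortDesc w i := h.sum_mul_sortDesc_le (sortDesc_antitone c)
    _ = ∑ i, c i * w (σ i) := hσ

theorem sum_mul_le_sum_filter_of_antitone {u c : Fin d → ℝ} (hu : Antitone u) {k : ℕ}
    (hk : k ≤ d) (hc0 : ∀ i, 0 ≤ c i) (hc1 : ∀ i, c i ≤ 1) (hcs : ∑ i, c i = k) :
    ∑ i, c i * u i ≤ ∑ i : Fin d with i.val < k, u i := by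
  cases k with
  | zero =>
    have hc : ∀ i, c i = 0 := by simpa [sum_eq_zero_iff_of_nonneg, hc0] using hcs
    simp [hc]
  | succ m =>
    -- the `(m + 1)`-th largest entry `t` separates the first `m + 1` entries from the others
    set t := u ⟨m, hk⟩
    have termwise (i : Fin d) : c i * u i ≤
        (if i.val < m + 1 then u i else 0) + (c i - if i.val < m + 1 then 1 else 0) * t := by
      split_ifs with hi
      · have : t ≤ u i := hu (Fin.le_iff_val_le_val.2 (show i.val ≤ m by omega))
        nlinarith [hc1 i]
      · have : u i ≤ t := hu (Fin.le_iff_val_le_val.2 (show m ≤ i.val by omega))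
        nlinarith [hc0 i]
    calc ∑ i, c i * u i
        ≤ ∑ i, ((if i.val < m + 1 then u i else 0) +
            (c i - if i.val < m + 1 then 1 else 0) * t) := sum_le_sum fun i _ => termwise i
      _ = ∑ i : Fin d with i.val < m + 1, u i := by
        rw [sum_add_distrib, ← sum_mul, sum_sub_distrib, hcs, ← sum_filter, ← sum_filter,
          sum_const, Fin.card_filter_val_lt, min_eq_right hk]
        simp

theorem sum_mul_le_psum {v c : Fin d → ℝ} {k : ℕ} (hk : k ≤ d) (hc0 : ∀ i, 0 ≤ c i)
    (hc1 : ∀ i, c i ≤ 1) (hcs : ∑ i, c i = k) : ∑ i, c i * v i ≤ psum v k := by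
  rw [← Equiv.sum_comp (sortDescPerm v)]
  exact sum_mul_le_sum_filter_of_antitone (sortDesc_antitone v) hk (fun _ => hc0 _)
    (fun _ => hc1 _) (by rwa [Equiv.sum_comp])

theorem psum_eq_sum_map (v : Fin d → ℝ) (k : ℕ) :
    psum v k =
      ∑ i ∈ (univ.filter fun i : Fin d => i.val < k).map (sortDescPerm v).toEmbedding, v i := by
  rw [sum_map]
  rfl

theorem sum_mulVec_le_psum {M : Matrix (Fin d) (Fin d) ℝ} (hM : M ∈ doublyStochastic ℝ (Fin d))
    (w : Fin d → ℝ) (s : Finset (Fin d)) : ∑ i ∈ s, (M *ᵥ w) i ≤ psum w #s := by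
  have hsum : ∑ i ∈ s, (M *ᵥ w) i = ∑ j, (∑ i ∈ s, M i j) * w j := by
    simp only [Matrix.mulVec, dotProduct, sum_mul]
    exact sum_comm
  have hM0 (i j : Fin d) : 0 ≤ M i j := nonneg_of_mem_doublyStochastic hM
  rw [hsum]
  refine sum_mul_le_psum (by simpa using card_le_univ s) (fun j => sum_nonneg fun i _ => hM0 i j)
    (fun j => ?_) ?_
  · calc ∑ i ∈ s, M i j ≤ ∑ i, M i j := sum_le_univ_sum_of_nonneg fun i => hM0 i j
      _ = 1 := sum_col_of_mem_doublyStochastic hM j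
  · rw [sum_comm]
    simp [sum_row_of_mem_doublyStochastic hM]

theorem majorizes_mulVec {M : Matrix (Fin d) (Fin d) ℝ} (hM : M ∈ doublyStochastic ℝ (Fin d))
    (w : Fin d → ℝ) : Majorizes (M *ᵥ w) w := by
  refine ⟨fun k hk => ?_, sum_mulVec_of_mem_doublyStochastic hM⟩
  have := sum_mulVec_le_psum hM w
    ((univ.filter fun i : Fin d => i.val < k).map (sortDescPerm (M *ᵥ w)).toEmbedding)
  rwa [card_map, Fin.card_filter_val_lt, min_eq_right hk, ← psum_eq_sum_map] at this

end

section
variable {n : Type*} [Fintype n] [DecidableEq n]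

theorem image_mulVec_doublyStochastic (w : n → ℝ) :
    (· *ᵥ w) '' (doublyStochastic ℝ n : Set (Matrix n n ℝ)) =
      convexHull ℝ (Set.range fun σ : Equiv.Perm n => w ∘ σ) := by
  rw [doublyStochastic_eq_convexHull_permMatrix]
  have := ((Matrix.mulVecBilin ℝ ℝ).flip w).image_convexHull {σ.permMatrix ℝ | σ : Equiv.Perm n}
  convert this using 2
  · ext M; simp
  · ext v
    simp [permMatrix_mulVec]

theorem mem_convexHull_range_comp_perm {w' w : n → ℝ}
    (h : ∀ c : n → ℝ, ∃ σ : Equiv.Perm n, ∑ i, c i * w' i ≤ ∑ i, c i * w (σ i)) :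
    w' ∈ convexHull ℝ (Set.range fun σ : Equiv.Perm n => w ∘ σ) := by
  by_contra hw'
  obtain ⟨f, u, hf, hu⟩ := geometric_hahn_banach_closed_point (convex_convexHull ℝ _)
    ((Set.finite_range _).isClosed_convexHull ℝ) hw'
  set c : n → ℝ := fun i => f fun j => if i = j then 1 else 0
  have hf_apply (x : n → ℝ) : f x = ∑ i, c i * x i := by
    rw [show f x = f.toLinearMap x from rfl, LinearMap.pi_apply_eq_sum_univ]
    simp only [smul_eq_mul, mul_comm]
    rfl
  obtain ⟨σ, hσ⟩ := h c
  have hfσ := hf _ (subset_convexHull ℝ _ ⟨σ, rfl⟩)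
  rw [hf_apply] at hfσ hu
  simp only [Function.comp_apply] at hfσ
  linarith
end

/-- Hardy–Littlewood–Pólya: `w' ≺ w` iff `w' = M w` for some doubly stochastic `M`. -/
theorem hardy_littlewood_polya {d : ℕ} (w w' : Fin d → ℝ) :
    Majorizes w' w ↔
      ∃ M : Matrix (Fin d) (Fin d) ℝ, DoublyStochastic M ∧ w' = M.mulVec w := by
  simp only [DoublyStochastic, ← mem_doublyStochastic_iff_sum]
  constructor
  · intro h
    have := mem_convexHull_range_comp_perm h.exists_perm_sum_mul_le
    rw [← image_mulVec_doublyStochastic] at this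
    obtain ⟨M, hM, rfl⟩ := this
    exact ⟨M, hM, rfl⟩
  · rintro ⟨M, hM, rfl⟩
    exact majorizes_mulVec hM w
end

section
/- (Birkhoff–von Neumann) The extreme points of the convex set of doubly stochastic d×d matrices are exactly the d! permutation matrices. -/
/-- The permutation matrix associated with `σ`. -/
def permMatrix {d : ℕ} (σ : Equiv.Perm (Fin d)) : Matrix (Fin d) (Fin d) ℝ :=
  fun i j => if i = σ j then 1 else 0

lemma doublyStochastic_set_eq {d : ℕ} :
    {M : Matrix (Fin d) (Fin d) ℝ | DoublyStochastic M}
      = (doublyStochastic ℝ (Fin d) : Set (Matrix (Fin d) (Fin d) ℝ)) := by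
  ext M
  simp [DoublyStochastic, mem_doublyStochastic_iff_sum, and_assoc]

lemma permMatrix_eq {d : ℕ} (σ : Equiv.Perm (Fin d)) :
    permMatrix σ = σ⁻¹.permMatrix ℝ := by
  ext i j
  rw [Equiv.Perm.permMatrix, PEquiv.toMatrix_apply, Equiv.toPEquiv_apply]
  simp only [permMatrix, Option.mem_def, Option.some.injEq]
  simp only [Equiv.Perm.inv_def, Equiv.symm_apply_eq]

lemma permMatrix_extreme {d : ℕ} (σ : Equiv.Perm (Fin d)) :
    permMatrix σ ∈ Set.extremePoints ℝ
      (doublyStochastic ℝ (Fin d) : Set (Matrix (Fin d) (Fin d) ℝ)) := by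
  rw [mem_extremePoints]
  have hmem : permMatrix σ ∈ doublyStochastic ℝ (Fin d) := by
    rw [permMatrix_eq]; exact permMatrix_mem_doublyStochastic
  refine ⟨hmem, ?_⟩
  intro X hX Y hY hseg
  obtain ⟨a, b, ha, hb, hab, hXY⟩ := hseg
  -- wherever permMatrix σ is 0, X and Y are 0
  have hzero : ∀ i j, permMatrix σ i j = 0 → X i j = 0 ∧ Y i j = 0 := by
    intro i j h0
    have h : a * X i j + b * Y i j = 0 := by
      have e := congrFun (congrFun hXY i) j
      simpa [h0, Matrix.add_apply, Matrix.smul_apply, smul_eq_mul] using e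
    have hx := nonneg_of_mem_doublyStochastic hX (i := i) (j := j)
    have hy := nonneg_of_mem_doublyStochastic hY (i := i) (j := j)
    constructor
    · nlinarith
    · nlinarith
  have key : ∀ Z, Z ∈ doublyStochastic ℝ (Fin d) →
      (∀ i j, permMatrix σ i j = 0 → Z i j = 0) → Z = permMatrix σ := by
    intro Z hZ hZ0
    ext i j
    by_cases h : i = σ j
    · subst h
      have hrow := sum_row_of_mem_doublyStochastic hZ (σ j)
      have : ∀ j' ∈ Finset.univ, j' ≠ j → Z (σ j) j' = 0 := by
        intro j' _ hj'
        exact hZ0 _ _ (by simp [permMatrix, σ.injective.eq_iff, Ne.symm hj'])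
      rw [Finset.sum_eq_single_of_mem j (Finset.mem_univ j) this] at hrow
      simp [permMatrix, hrow]
    · have : Z i j = 0 := hZ0 i j (by simp [permMatrix, h])
      simp [permMatrix, h, this]
  exact ⟨key X hX fun i j h => (hzero i j h).1, key Y hY fun i j h => (hzero i j h).2⟩

/-- Birkhoff–von Neumann: the extreme points of the set of doubly stochastic
matrices are exactly the permutation matrices. -/
theorem birkhoff_von_neumann {d : ℕ} :
    Set.extremePoints ℝ {M : Matrix (Fin d) (Fin d) ℝ | DoublyStochastic M} =
      {M : Matrix (Fin d) (Fin d) ℝ | ∃ σ : Equiv.Perm (Fin d), M = permMatrix σ} := by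
  rw [doublyStochastic_set_eq]
  ext M
  constructor
  · intro hM
    have h1 : M ∈ (doublyStochastic ℝ (Fin d) : Set (Matrix (Fin d) (Fin d) ℝ)) :=
      hM.1
    rw [show (doublyStochastic ℝ (Fin d) : Set (Matrix (Fin d) (Fin d) ℝ))
        = convexHull ℝ {σ.permMatrix ℝ | σ : Equiv.Perm (Fin d)} from by
        rw [← doublyStochastic_eq_convexHull_permMatrix]] at hM
    obtain ⟨σ, hσ⟩ := extremePoints_convexHull_subset hM
    exact ⟨σ⁻¹, by rw [permMatrix_eq, inv_inv, hσ]⟩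
  · rintro ⟨σ, rfl⟩
    exact permMatrix_extreme σ
end

section
/- (Ky Fan) Let H be a Hermitian operator on a D-dimensional complex Hilbert space with eigenvalues E_1 ≤ E_2 ≤ … ≤ E_D. Then for each k ≤ D, the sum E_1 + … + E_k equals the minimum of Tr(P_V H) over all k-dimensional subspaces V, where P_V is the orthogonal projection onto V. -/
/-!
Conjugating `H` by a unitary (and a permutation) diagonalizes it with the sorted eigenvalues
`E` on the diagonal, and conjugation preserves being a rank-`k` orthogonal projection as well as
`Tr(P H)`. For `H = diag E`, `Tr(P H) = ∑ᵢ Pᵢᵢ Eᵢ`, where the diagonal entries of an orthogonal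
projection lie in `[0, 1]` and sum to its rank `k`. Minimizing a linear function of such
weights is a linear program whose optimum puts weight `1` on the `k` smallest `Eᵢ`, and the
coordinate projection onto those eigenvectors attains it.
-/

open Finset Matrix
open scoped ComplexOrder MatrixOrder

theorem Monotone.sum_filter_lt_le_sum_mul {D k : ℕ} (hk : k ≤ D) {E : Fin D → ℝ}
    (hE : Monotone E) {s : Fin D → ℝ} (hs0 : ∀ j, 0 ≤ s j) (hs1 : ∀ j, s j ≤ 1)
    (hsum : ∑ j, s j = k) :
    ∑ j ∈ univ.filter (fun j : Fin D => (j : ℕ) < k), E j ≤ ∑ j, E j * s j := by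
  obtain ⟨c, hc_lt, hc_ge⟩ : ∃ c, (∀ j : Fin D, (j : ℕ) < k → E j ≤ c) ∧
      ∀ j : Fin D, k ≤ (j : ℕ) → c ≤ E j := by
    rcases hk.lt_or_eq with hk | rfl
    · exact ⟨E ⟨k, hk⟩, fun j hj => hE (Fin.le_def.2 hj.le), fun j hj => hE hj⟩
    · obtain ⟨c, hc⟩ := (Set.finite_range E).bddAbove
      exact ⟨c, fun j _ => hc ⟨j, rfl⟩, fun j hj => absurd j.2 (not_lt.2 hj)⟩
  set χ : Fin D → ℝ := fun j => if (j : ℕ) < k then 1 else 0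
  have hχ : ∑ j, χ j = k := by simp [χ, sum_boole, Fin.card_filter_val_lt, hk]
  -- `c` separates the `k` smallest values of `E` from the others, so both factors have the
  -- same sign in every term.
  have hsplit : 0 ≤ ∑ j, (E j - c) * (s j - χ j) := sum_nonneg fun j _ => by
    by_cases hj : (j : ℕ) < k
    · simpa [χ, hj] using mul_nonneg_of_nonpos_of_nonpos (sub_nonpos.2 (hc_lt j hj))
        (sub_nonpos.2 (hs1 j))
    · simpa [χ, hj] using mul_nonneg (sub_nonneg.2 (hc_ge j (not_lt.1 hj))) (hs0 j)
  have hexpand : ∑ j, (E j - c) * (s j - χ j) =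
      ∑ j, E j * s j - ∑ j ∈ univ.filter (fun j : Fin D => (j : ℕ) < k), E j := by
    simp only [sub_mul, mul_sub, sum_sub_distrib, ← mul_sum, hsum, hχ]
    simp only [χ, sum_filter, mul_ite, mul_one, mul_zero]
    ring
  linarith

section Projections

variable {n : Type*} [Fintype n] [DecidableEq n]

theorem Matrix.trace_eq_rank_of_isIdempotentElem {K : Type*} [Field K] {P : Matrix n n K}
    (hP : IsIdempotentElem P) : P.trace = P.rank := by
  have hP' : IsIdempotentElem (toLin' P) := hP.map toLinAlgEquiv'
  rw [← trace_toLin'_eq, ((LinearMap.isProj_range_iff_isIdempotentElem _).mpr hP').trace, rank,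
    toLin'_apply']

variable {𝕜 : Type*} [RCLike 𝕜]

theorem Matrix.IsHermitian.diag_mem_Icc_of_mul_self_eq {P : Matrix n n 𝕜} (hP : P.IsHermitian)
    (hPP : P * P = P) (i : n) : P i i ∈ Set.Icc 0 1 := by
  have hproj : IsStarProjection P := ⟨hPP, hP⟩
  refine ⟨hproj.nonneg.posSemidef.diag_nonneg, ?_⟩
  simpa using hproj.one_sub_nonneg.posSemidef.diag_nonneg (i := i)

def projTraces (H : Matrix n n 𝕜) (k : ℕ) : Set ℝ :=
  {x | ∃ P : Matrix n n 𝕜, P.IsHermitian ∧ P * P = P ∧ P.rank = k ∧ (P * H).trace = x}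

theorem projTraces_subset_map (f : Matrix n n 𝕜 ≃⋆ₐ[𝕜] Matrix n n 𝕜) (H : Matrix n n 𝕜)
    (k : ℕ) : projTraces H k ⊆ projTraces (f H) k := by
  rintro x ⟨P, hP, hPP, hrank, htrace⟩
  have hfP : f P * f P = f P := by rw [← map_mul, hPP]
  refine ⟨f P, ?_, hfP, ?_, ?_⟩
  · rw [IsHermitian, ← star_eq_conjTranspose, ← map_star, star_eq_conjTranspose, hP.eq]
  · rw [← Nat.cast_inj (R := 𝕜), ← trace_eq_rank_of_isIdempotentElem hfP, Matrix.trace_map,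
      trace_eq_rank_of_isIdempotentElem hPP, hrank]
  · rw [← map_mul, Matrix.trace_map, htrace]

theorem projTraces_map (f : Matrix n n 𝕜 ≃⋆ₐ[𝕜] Matrix n n 𝕜) (H : Matrix n n 𝕜) (k : ℕ) :
    projTraces (f H) k = projTraces H k :=
  Set.Subset.antisymm (by simpa using projTraces_subset_map f.symm (f H) k)
    (projTraces_subset_map f H k)

def Matrix.reindexStarAlgEquiv {m : Type*} [Fintype m] [DecidableEq m] (e : n ≃ m) :
    Matrix n n 𝕜 ≃⋆ₐ[𝕜] Matrix m m 𝕜 :=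
  .ofAlgEquiv (reindexAlgEquiv 𝕜 𝕜 e) fun M => (conjTranspose_reindex e e M).symm

@[simp]
theorem Matrix.reindexStarAlgEquiv_apply {m : Type*} [Fintype m] [DecidableEq m] (e : n ≃ m)
    (M : Matrix n n 𝕜) : reindexStarAlgEquiv e M = reindex e e M :=
  rfl

theorem isLeast_projTraces_diagonal {D k : ℕ} (hk : k ≤ D) {E : Fin D → ℝ} (hE : Monotone E) :
    IsLeast (projTraces (diagonal (RCLike.ofReal ∘ E) : Matrix (Fin D) (Fin D) 𝕜) k)
      (∑ j ∈ univ.filter (fun j : Fin D => (j : ℕ) < k), E j) := by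
  have trace_mul_diagonal (P : Matrix (Fin D) (Fin D) 𝕜) :
      (P * diagonal (RCLike.ofReal ∘ E)).trace = ∑ i, P i i * E i := by
    simp [trace, mul_diagonal]
  constructor
  · refine ⟨diagonal fun j => if (j : ℕ) < k then 1 else 0, ?_, ?_, ?_, ?_⟩
    · simp [IsHermitian, diagonal_conjTranspose, apply_ite]
    · simp [diagonal_mul_diagonal]
    · simp [rank_diagonal, Fintype.card_subtype, Fin.card_filter_val_lt, hk]
    · rw [trace_mul_diagonal, sum_filter]
      push_cast
      simp [ite_mul, apply_ite]
  · rintro x ⟨P, hP, hPP, hrank, htrace⟩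
    set s : Fin D → ℝ := fun i => RCLike.re (P i i)
    have hPs (i : Fin D) : P i i = s i := (congrFun hP.coe_re_diag i).symm
    have hsum : ∑ i, s i = k := by
      have := trace_eq_rank_of_isIdempotentElem hPP
      simp only [hrank, trace, Matrix.diag_apply, hPs] at this
      exact_mod_cast this
    have hx : x = ∑ i, E i * s i := by
      apply RCLike.ofReal_injective (K := 𝕜)
      simp [← htrace, trace_mul_diagonal, hPs, mul_comm]
    have hs := hP.diag_mem_Icc_of_mul_self_eq hPP
    rw [hx]
    refine hE.sum_filter_lt_le_sum_mul hk (fun i => RCLike.ofReal_nonneg (K := 𝕜).1 ?_)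
      (fun i => RCLike.ofReal_le_ofReal (K := 𝕜).1 ?_) hsum
    · exact hPs i ▸ (hs i).1
    · exact RCLike.ofReal_one (K := 𝕜) ▸ hPs i ▸ (hs i).2

end Projections

/-- Ky Fan variational principle: for a Hermitian operator `H` on a `D`-dimensional
complex Hilbert space with increasingly ordered eigenvalues `E 0 ≤ … ≤ E (D-1)`,
the sum of the `k` smallest eigenvalues equals the minimum of `Tr(P_V H)` over all
`k`-dimensional subspaces `V` (orthogonal projections `P` being exactly the
Hermitian idempotent matrices, of rank `k`). -/
theorem ky_fan {D : ℕ} (H : Matrix (Fin D) (Fin D) ℂ) (hH : H.IsHermitian)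
    (E : Fin D → ℝ) (hEmono : Monotone E)
    (hEeig : ∃ σ : Equiv.Perm (Fin D), E = hH.eigenvalues ∘ σ)
    (k : ℕ) (hk : k ≤ D) :
    IsLeast {x : ℝ | ∃ P : Matrix (Fin D) (Fin D) ℂ,
        P.IsHermitian ∧ P * P = P ∧ P.rank = k ∧ (P * H).trace = (x : ℂ)}
      (∑ j ∈ Finset.univ.filter (fun j : Fin D => (j : ℕ) < k), E j) := by
  obtain ⟨σ, hσ⟩ := hEeig
  have hsort : reindexStarAlgEquiv σ (diagonal (RCLike.ofReal ∘ E)) =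
      (diagonal (RCLike.ofReal ∘ hH.eigenvalues) : Matrix (Fin D) (Fin D) ℂ) := by
    simp [submatrix_diagonal_equiv, hσ]
  have hH_eq := hH.spectral_theorem
  rw [← hsort] at hH_eq
  change IsLeast (projTraces H k) _
  rw [hH_eq, projTraces_map, projTraces_map]
  exact isLeast_projTraces_diagonal hk hEmono
end
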